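/- Let T = ℝ/2πℤ with normalized Haar probability measure ν and fix ε ∈ (0,1). For i ≥ 1 let I_i ⊂ T be the closed arc of points at distance at most ε^{3^i}/2 from 0, and define the van Enter–Ruszel potential U : T → ℝ by U(x) = Σ_{i=1}^{∞} (3/2^{2i+1})·1_{I_{2i}}(x) + Σ_{i=1}^{∞} (3/2^{2i+2})·1_{I_{2i+1}}(x − π) + (1/4)·1_{I_1}(x − π). Let N = { x ∈ T : dist(x, 0) ≤ π/2 } and define G_ε(β) = ( ∫_N e^{βU} dν ) / ( ∫_T e^{βU} dν ) for β > 0. Then for every δ ∈ (0, 1/2) there exists ε_δ > 0 such that for all 0 < ε < ε_δ: limsup_{β→∞} G_ε(β) > 1 − δ and liminf_{β→∞} G_ε(β) < δ. In particular, for ε small enough G_ε(β) has no limit as β → ∞, so the one-parameter family of probability measures on T with densities e^{βU}/∫_T e^{βU} dν (the two-site marginals of the Gibbs states of the nearest-neighbor interaction A(x,y) = U(x−y)) does not converge weakly as the temperature goes to zero: there is no selection of measure. -/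

import Mathlib

/-!
On `N` the potential is the nested step function `∑ cᵢ 1_{I_{2i}}` around `0`, off `N` it is the
nested step function `∑ dᵢ 1_{I_{2i+1}}(· - π)` around `π`; both have total height `1/2`, and the
arcs shrink super-exponentially (`ν(I_i) ≈ ε^{3^i}`). At `β = b log ε⁻¹` a layer of height `v` on
an arc of measure `ε^m` contributes about `ε^{m - b v}` to the partition function. Choosing
`b ≍ 36^k` makes the `k`-th even arc (resp. odd arc) beat every layer on the other side,
geometrically in `ε`, so that side carries at most a fraction `3ε` of the mass. Along these two
sequences of inverse temperatures `G_ε` is alternately `≥ 1 - 3ε` and `≤ 3ε`.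
-/

open MeasureTheory Filter Topology

noncomputable section

instance : Fact (0 < 2 * Real.pi) := ⟨by positivity⟩

/-- The circle `M = ℝ/2πℤ` with arc-length metric. -/
abbrev Circ : Type := AddCircle (2 * Real.pi)

/-- The normalized Haar (Lebesgue) probability measure on the circle. -/
def haarC : Measure Circ := AddCircle.haarAddCircle

/-- The closed arc `I_i` of points at distance at most `ε^{3^i}/2` from `0 ∈ T`. -/
def Iarc (ε : ℝ) (i : ℕ) : Set Circ := {x : Circ | ‖x‖ ≤ ε ^ (3 ^ i) / 2}

/-- The van Enter–Ruszel potential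
`U(x) = Σ_i (3/2^{2i+1}) 1_{I_{2i}}(x) + Σ_i (3/2^{2i+2}) 1_{I_{2i+1}}(x−π) + (1/4) 1_{I_1}(x−π)`
(sums over `i ≥ 1`). -/
def Upot (ε : ℝ) : Circ → ℝ := fun x =>
  (∑' i : ℕ, (3 / 2 ^ (2 * (i + 1) + 1) : ℝ) *
      Set.indicator (Iarc ε (2 * (i + 1))) (fun _ => (1 : ℝ)) x)
  + (∑' i : ℕ, (3 / 2 ^ (2 * (i + 1) + 2) : ℝ) *
      Set.indicator (Iarc ε (2 * (i + 1) + 1)) (fun _ => (1 : ℝ)) (x - (Real.pi : Circ)))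
  + (1 / 4 : ℝ) * Set.indicator (Iarc ε 1) (fun _ => (1 : ℝ)) (x - (Real.pi : Circ))

/-- The neighborhood `N` of the ferromagnetic configurations: points at distance
at most `π/2` from `0`. -/
def Nset : Set Circ := {x : Circ | ‖x‖ ≤ Real.pi / 2}

/-- `G_ε(β) = (∫_N e^{βU} dν)/(∫_T e^{βU} dν)`, the two-site Gibbs probability of `N`. -/
def Gfun (ε β : ℝ) : ℝ :=
  (∫ x in Nset, Real.exp (β * Upot ε x) ∂haarC) / ∫ x, Real.exp (β * Upot ε x) ∂haarC


open Set Real Finset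

section StepSum

variable {α : Type*}

def stepSum (a : ℕ → ℝ) (t : ℕ → Set α) (y : α) : ℝ :=
  ∑' i, a i * (t i).indicator (fun _ => (1 : ℝ)) y

variable {a : ℕ → ℝ} {t : ℕ → Set α} {y : α}

lemma exists_mem_notMem_succ {n : ℕ} (h0 : y ∈ t 0) (hn : y ∉ t n) :
    ∃ j < n, y ∈ t j ∧ y ∉ t (j + 1) := by
  induction n with
  | zero => exact absurd h0 hn
  | succ n ih =>
    by_cases h : y ∈ t n
    · exact ⟨n, n.lt_succ_self, h, hn⟩
    · obtain ⟨j, hj, hmem⟩ := ih h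
      exact ⟨j, by omega, hmem⟩

lemma mul_indicator_one_le {c : ℝ} {s : Set α} (hc : 0 ≤ c) :
    c * s.indicator (fun _ => (1 : ℝ)) y ≤ c :=
  mul_le_of_le_one_right hc (indicator_apply_le' (fun _ => le_rfl) fun _ => zero_le_one)

lemma summable_mul_indicator (ha : ∀ i, 0 ≤ a i) (has : Summable a) :
    Summable fun i => a i * (t i).indicator (fun _ => (1 : ℝ)) y :=
  has.of_nonneg_of_le (fun i => mul_nonneg (ha i) (indicator_nonneg (by simp) y))
    fun i => mul_indicator_one_le (ha i)

lemma stepSum_nonneg (ha : ∀ i, 0 ≤ a i) : 0 ≤ stepSum a t y :=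
  tsum_nonneg fun i => mul_nonneg (ha i) (indicator_nonneg (by simp) y)

lemma stepSum_le_tsum (ha : ∀ i, 0 ≤ a i) (has : Summable a) : stepSum a t y ≤ ∑' i, a i :=
  (summable_mul_indicator ha has).tsum_le_tsum (fun i => mul_indicator_one_le (ha i)) has

lemma stepSum_eq_zero (hy : ∀ i, y ∉ t i) : stepSum a t y = 0 := by
  simp [stepSum, indicator_of_notMem (hy _)]

lemma stepSum_le_sum_of_notMem (ha : ∀ i, 0 ≤ a i) (ht : Antitone t) {n : ℕ} (hy : y ∉ t n) :
    stepSum a t y ≤ ∑ i ∈ range n, a i := by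
  rw [stepSum, tsum_eq_sum (s := range n) fun i hi =>
    by rw [indicator_of_notMem fun h => hy (ht (by simpa using hi) h), mul_zero]]
  exact sum_le_sum fun i _ => mul_indicator_one_le (ha i)

lemma sum_le_stepSum_of_mem (ha : ∀ i, 0 ≤ a i) (has : Summable a) (ht : Antitone t) {n : ℕ}
    (hy : y ∈ t n) : ∑ i ∈ range (n + 1), a i ≤ stepSum a t y := by
  calc ∑ i ∈ range (n + 1), a i
      = ∑ i ∈ range (n + 1), a i * (t i).indicator (fun _ => (1 : ℝ)) y :=
        sum_congr rfl fun i hi => by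
          rw [indicator_of_mem (ht (Nat.lt_succ_iff.mp (mem_range.mp hi)) hy), mul_one]
    _ ≤ stepSum a t y := (summable_mul_indicator ha has).sum_le_tsum _ fun i _ =>
        mul_nonneg (ha i) (indicator_nonneg (by simp) y)

lemma exp_mul_stepSum_le (ha : ∀ i, 0 ≤ a i) (has : Summable a) (ht : Antitone t) {β : ℝ}
    (hβ : 0 ≤ β) (n : ℕ) :
    exp (β * stepSum a t y) ≤ 1 + ∑ j ∈ range n,
        (t j).indicator (fun _ => exp (β * ∑ i ∈ range (j + 1), a i)) y
      + (t n).indicator (fun _ => exp (β * ∑' i, a i)) y := by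
  have hind : ∀ (s : Set α) (c : ℝ), 0 ≤ s.indicator (fun _ => exp c) y :=
    fun s c => indicator_nonneg (fun _ _ => (exp_pos c).le) y
  have hsum : 0 ≤ ∑ j ∈ range n,
      (t j).indicator (fun _ => exp (β * ∑ i ∈ range (j + 1), a i)) y :=
    sum_nonneg fun j _ => hind _ _
  have hexp : ∀ {v}, stepSum a t y ≤ v → exp (β * stepSum a t y) ≤ exp (β * v) :=
    fun h => exp_le_exp.mpr (mul_le_mul_of_nonneg_left h hβ)
  by_cases hn : y ∈ t n
  · have := hexp (stepSum_le_tsum ha has)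
    rw [indicator_of_mem hn]
    linarith
  by_cases h0 : y ∈ t 0
  · obtain ⟨j, hj, hyj, hyj'⟩ := exists_mem_notMem_succ h0 hn
    have hj_le := single_le_sum (fun j _ => hind (t j) (β * ∑ i ∈ range (j + 1), a i))
      (mem_range.mpr hj)
    have := hexp (stepSum_le_sum_of_notMem ha ht hyj')
    rw [indicator_of_mem hyj] at hj_le
    linarith [hind (t n) (β * ∑' i, a i)]
  · have := hexp (stepSum_le_sum_of_notMem ha ht (n := 0) h0)
    simp only [range_zero, sum_empty, mul_zero, exp_zero] at this
    linarith [hind (t n) (β * ∑' i, a i)]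

lemma measurable_stepSum [MeasurableSpace α] (ht : ∀ i, MeasurableSet (t i)) :
    Measurable (stepSum a t) :=
  Measurable.tsum fun i => (measurable_const.indicator (ht i)).const_mul _

end StepSum

lemma sum_pow_succ_le_one {ε : ℝ} (hε0 : 0 ≤ ε) (hε : ε ≤ 1 / 2) (n : ℕ) :
    ∑ j ∈ range n, ε ^ (j + 1) ≤ 1 := by
  calc ∑ j ∈ range n, ε ^ (j + 1) ≤ ∑ j ∈ range n, (1 / 2 : ℝ) ^ (j + 1) :=
        sum_le_sum fun j _ => pow_le_pow_left₀ hε0 hε _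
    _ = 1 / 2 * ∑ j ∈ range n, (1 / 2 : ℝ) ^ j := by rw [mul_sum]; simp only [pow_succ, mul_comm]
    _ ≤ 1 := by linarith [sum_geometric_two_le n]

lemma exp_mul_log_inv_mul_pow {ε : ℝ} (hε0 : 0 < ε) (b v : ℝ) (m : ℕ) :
    exp (b * log ε⁻¹ * v) * ε ^ m = ε ^ ((m : ℝ) - b * v) := by
  rw [rpow_sub hε0, rpow_natCast, rpow_def_of_pos hε0, log_inv, div_eq_mul_inv, ← exp_neg]
  ring_nf

/-- Every term on the left has the form `ε ^ (m - b v)`: the hypotheses make the `j`-th one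
lighter than `ε ^ (p - b u)` by a factor `ε ^ (j + 2)`, the constant and the last one by `ε`. -/
lemma one_add_sum_exp_mul_pow_le {ε b u τ : ℝ} {p n : ℕ} {σ : ℕ → ℝ} {q : ℕ → ℕ} (hε0 : 0 < ε)
    (hε : ε ≤ 1 / 2) (hdom : (p : ℝ) - b * u ≤ -1)
    (hlev : ∀ j < n, (p : ℝ) - b * u + j + 2 ≤ q j - b * σ j)
    (htop : (p : ℝ) - b * u + 1 ≤ q n - b * τ) :
    1 + ∑ j ∈ range n, exp (b * log ε⁻¹ * σ j) * ε ^ q j + exp (b * log ε⁻¹ * τ) * ε ^ q n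
      ≤ 3 * ε * (exp (b * log ε⁻¹ * u) * ε ^ p) := by
  set e := (p : ℝ) - b * u
  have hmono : ∀ {x y : ℝ}, y ≤ x → ε ^ x ≤ ε ^ y :=
    fun h => rpow_le_rpow_of_exponent_ge hε0 (by linarith) h
  have hone : 1 ≤ ε ^ (e + 1) :=
    one_le_rpow_of_pos_of_le_one_of_nonpos hε0 (by linarith) (by linarith)
  have htop' : exp (b * log ε⁻¹ * τ) * ε ^ q n ≤ ε ^ (e + 1) := by
    rw [exp_mul_log_inv_mul_pow hε0]; exact hmono htop
  have hlev' : ∑ j ∈ range n, exp (b * log ε⁻¹ * σ j) * ε ^ q j ≤ ε ^ (e + 1) :=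
    calc ∑ j ∈ range n, exp (b * log ε⁻¹ * σ j) * ε ^ q j
        ≤ ∑ j ∈ range n, ε ^ (e + 1) * ε ^ (j + 1) := sum_le_sum fun j hj => by
          rw [exp_mul_log_inv_mul_pow hε0, ← rpow_natCast, ← rpow_add hε0]
          exact hmono (by push_cast; linarith [hlev j (mem_range.mp hj)])
      _ = ε ^ (e + 1) * ∑ j ∈ range n, ε ^ (j + 1) := (mul_sum ..).symm
      _ ≤ ε ^ (e + 1) := mul_le_of_le_one_right (rpow_nonneg hε0.le _)
          (sum_pow_succ_le_one hε0.le hε n)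
  rw [exp_mul_log_inv_mul_pow hε0 b u p]
  rw [rpow_add_one hε0.ne'] at hone htop' hlev'
  linarith

section Laplace

lemma exp_mul_le_setIntegral_exp {X : Type*} [MeasurableSpace X] {μ : Measure X}
    [IsFiniteMeasure μ] {f : X → ℝ} {P W : Set X} {β u : ℝ} (hβ : 0 ≤ β) (hP : MeasurableSet P)
    (hPW : P ⊆ W) (hu : ∀ x ∈ P, u ≤ f x) (hint : IntegrableOn (fun x => exp (β * f x)) W μ) :
    exp (β * u) * μ.real P ≤ ∫ x in W, exp (β * f x) ∂μ :=
  (setIntegral_ge_of_const_le_real hP (measure_ne_top _ _)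
    (fun x hx => exp_le_exp.mpr (mul_le_mul_of_nonneg_left (hu x hx) hβ)) (hint.mono_set hPW)).trans
    (setIntegral_mono_set hint (ae_of_all _ fun _ => (exp_pos _).le) hPW.eventuallyLE)

variable {G : Type*} [AddGroup G] [MeasurableSpace G] [MeasurableAdd G] {μ : Measure G}
  [μ.IsAddRightInvariant]

lemma measureReal_preimage_sub_right (c : G) (S : Set G) :
    μ.real ((fun x => x - c) ⁻¹' S) = μ.real S := by
  simp only [measureReal_def, sub_eq_add_neg, measure_preimage_add_right]

variable [IsProbabilityMeasure μ]

lemma setIntegral_exp_le_of_le_stepSum {a : ℕ → ℝ} {t : ℕ → Set G} (ha : ∀ i, 0 ≤ a i)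
    (has : Summable a) (ht : Antitone t) (htm : ∀ i, MeasurableSet (t i)) {β : ℝ} (hβ : 0 ≤ β)
    {f : G → ℝ} {W : Set G} {c : G} (hW : MeasurableSet W)
    (hf : ∀ x ∈ W, f x ≤ stepSum a t (x - c)) (n : ℕ) :
    ∫ x in W, exp (β * f x) ∂μ ≤ 1 + ∑ j ∈ range n,
        exp (β * ∑ i ∈ range (j + 1), a i) * μ.real (t j)
      + exp (β * ∑' i, a i) * μ.real (t n) := by
  set Φ : G → ℝ := fun y => 1 + ∑ j ∈ range n,
      (t j).indicator (fun _ => exp (β * ∑ i ∈ range (j + 1), a i)) y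
    + (t n).indicator (fun _ => exp (β * ∑' i, a i)) y with hΦ
  have hind : ∀ j (v : ℝ), Integrable ((t j).indicator fun _ => v) μ :=
    fun j v => (integrable_const v).indicator (htm j)
  have hsum : Integrable (fun y => ∑ j ∈ range n,
      (t j).indicator (fun _ => exp (β * ∑ i ∈ range (j + 1), a i)) y) μ :=
    integrable_finsetSum _ fun j _ => hind j _
  have hsum₁ : Integrable (fun y => 1 + ∑ j ∈ range n,
      (t j).indicator (fun _ => exp (β * ∑ i ∈ range (j + 1), a i)) y) μ :=
    (integrable_const 1).add hsum
  have hΦint : Integrable Φ μ := hsum₁.add (hind n _)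
  have hΦ0 : ∀ y, 0 ≤ Φ y := fun y =>
    (exp_pos _).le.trans (exp_mul_stepSum_le ha has ht hβ n)
  calc ∫ x in W, exp (β * f x) ∂μ ≤ ∫ x in W, Φ (x - c) ∂μ :=
        integral_mono_of_nonneg (ae_of_all _ fun _ => (exp_pos _).le)
          (hΦint.comp_sub_right c).integrableOn
          (ae_restrict_of_forall_mem hW fun x hx => (exp_le_exp.mpr
            (mul_le_mul_of_nonneg_left (hf x hx) hβ)).trans (exp_mul_stepSum_le ha has ht hβ n))
    _ ≤ ∫ x, Φ (x - c) ∂μ :=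
        setIntegral_le_integral (hΦint.comp_sub_right c) (ae_of_all _ fun x => hΦ0 _)
    _ = ∫ y, Φ y ∂μ := integral_sub_right_eq_self Φ c
    _ = _ := by
      rw [hΦ, integral_add hsum₁ (hind n _),
        integral_add (integrable_const 1) hsum, integral_finsetSum _ fun j _ => hind j _]
      simp [integral_indicator_const _ (htm _), mul_comm]

lemma setIntegral_exp_le_three_mul {a : ℕ → ℝ} {t : ℕ → Set G} (ha : ∀ i, 0 ≤ a i)
    (has : Summable a) (ht : Antitone t) (htm : ∀ i, MeasurableSet (t i)) {f : G → ℝ}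
    {W W' P : Set G} {c : G} {ε b u : ℝ} {p n : ℕ} {q : ℕ → ℕ} (hε0 : 0 < ε) (hε : ε ≤ 1 / 2)
    (hb : 0 ≤ b) (hW' : MeasurableSet W') (hf : ∀ x ∈ W', f x ≤ stepSum a t (x - c))
    (hP : MeasurableSet P) (hPW : P ⊆ W) (hu : ∀ x ∈ P, u ≤ f x)
    (hint : IntegrableOn (fun x => exp (b * log ε⁻¹ * f x)) W μ)
    (hq : ∀ j ≤ n, μ.real (t j) ≤ ε ^ q j) (hp : ε ^ p ≤ μ.real P)
    (hdom : (p : ℝ) - b * u ≤ -1)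
    (hlev : ∀ j < n, (p : ℝ) - b * u + j + 2 ≤ q j - b * ∑ i ∈ range (j + 1), a i)
    (htop : (p : ℝ) - b * u + 1 ≤ q n - b * ∑' i, a i) :
    ∫ x in W', exp (b * log ε⁻¹ * f x) ∂μ ≤ 3 * ε * ∫ x in W, exp (b * log ε⁻¹ * f x) ∂μ := by
  have hβ : 0 ≤ b * log ε⁻¹ :=
    mul_nonneg hb (log_nonneg (one_le_inv₀ hε0 |>.mpr (by linarith)))
  calc ∫ x in W', exp (b * log ε⁻¹ * f x) ∂μ
      ≤ 1 + ∑ j ∈ range n, exp (b * log ε⁻¹ * ∑ i ∈ range (j + 1), a i) * μ.real (t j)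
          + exp (b * log ε⁻¹ * ∑' i, a i) * μ.real (t n) :=
        setIntegral_exp_le_of_le_stepSum ha has ht htm hβ hW' hf n
    _ ≤ 1 + ∑ j ∈ range n, exp (b * log ε⁻¹ * ∑ i ∈ range (j + 1), a i) * ε ^ q j
          + exp (b * log ε⁻¹ * ∑' i, a i) * ε ^ q n := by
        gcongr with j hj
        · exact hq j (mem_range.mp hj).le
        · exact hq n le_rfl
    _ ≤ 3 * ε * (exp (b * log ε⁻¹ * u) * ε ^ p) :=
        one_add_sum_exp_mul_pow_le hε0 hε hdom hlev htop
    _ ≤ 3 * ε * ∫ x in W, exp (b * log ε⁻¹ * f x) ∂μ := by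
        gcongr
        exact (mul_le_mul_of_nonneg_left hp (exp_pos _).le).trans
          (exp_mul_le_setIntegral_exp hβ hP hPW hu hint)

end Laplace

def evenWeight (i : ℕ) : ℝ := 3 / 2 ^ (2 * (i + 1) + 1)

def oddWeight : ℕ → ℝ
  | 0 => 1 / 4
  | i + 1 => 3 / 2 ^ (2 * (i + 1) + 2)

def evenArc (ε : ℝ) (i : ℕ) : Set Circ := Iarc ε (2 * (i + 1))

def oddArc (ε : ℝ) (i : ℕ) : Set Circ := Iarc ε (2 * i + 1)

lemma evenWeight_nonneg (i : ℕ) : 0 ≤ evenWeight i := by unfold evenWeight; positivity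

lemma oddWeight_nonneg : ∀ i, 0 ≤ oddWeight i
  | 0 => by norm_num [oddWeight]
  | i + 1 => by unfold oddWeight; positivity

lemma evenWeight_eq (n : ℕ) : evenWeight n = 3 / 8 * (1 / 4) ^ n := by
  rw [evenWeight, show 2 * (n + 1) + 1 = 2 * n + 3 by ring, pow_add, pow_mul, one_div_pow]
  norm_num
  ring

lemma oddWeight_succ_eq (n : ℕ) : oddWeight (n + 1) = 3 / 16 * (1 / 4) ^ n := by
  rw [oddWeight, show 2 * (n + 1) + 2 = 2 * n + 4 by ring, pow_add, pow_mul, one_div_pow]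
  norm_num
  ring

lemma sum_range_evenWeight (n : ℕ) : ∑ i ∈ range n, evenWeight i = 1 / 2 - (1 / 4) ^ n / 2 := by
  induction n with
  | zero => norm_num
  | succ n ih => rw [sum_range_succ, ih, evenWeight_eq]; ring

lemma sum_range_succ_oddWeight (n : ℕ) :
    ∑ i ∈ range (n + 1), oddWeight i = 1 / 2 - (1 / 4) ^ (n + 1) := by
  induction n with
  | zero => norm_num [oddWeight]
  | succ n ih => rw [sum_range_succ, ih, oddWeight_succ_eq]; ring

lemma hasSum_evenWeight : HasSum evenWeight (1 / 2) := by
  refine (hasSum_iff_tendsto_nat_of_nonneg evenWeight_nonneg _).mpr ?_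
  simp_rw [sum_range_evenWeight]
  simpa using (tendsto_pow_atTop_nhds_zero_of_lt_one (by norm_num : (0 : ℝ) ≤ 1 / 4)
    (by norm_num)).div_const 2 |>.const_sub (1 / 2 : ℝ)

lemma hasSum_oddWeight : HasSum oddWeight (1 / 2) := by
  refine (hasSum_iff_tendsto_nat_of_nonneg oddWeight_nonneg _).mpr
    ((tendsto_add_atTop_iff_nat 1).mp ?_)
  simp_rw [sum_range_succ_oddWeight]
  simpa using ((tendsto_pow_atTop_nhds_zero_of_lt_one (by norm_num : (0 : ℝ) ≤ 1 / 4)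
    (by norm_num)).comp (tendsto_add_atTop_nat 1)).const_sub (1 / 2 : ℝ)

lemma Upot_eq_stepSum (ε : ℝ) (x : Circ) :
    Upot ε x = stepSum evenWeight (evenArc ε) x + stepSum oddWeight (oddArc ε) (x - π) := by
  rw [Upot, add_assoc, stepSum, stepSum,
    (summable_mul_indicator oddWeight_nonneg hasSum_oddWeight.summable).tsum_eq_zero_add]
  simp only [evenWeight, oddWeight, evenArc, oddArc]
  ring_nf

lemma AddCircle.haarAddCircle_real_closedBall {T : ℝ} [Fact (0 < T)] (x : AddCircle T) {r : ℝ}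
    (hr0 : 0 ≤ r) (hr : 2 * r ≤ T) :
    AddCircle.haarAddCircle.real (Metric.closedBall x r) = 2 * r / T := by
  have hT : 0 < T := Fact.out
  have h := congrArg ENNReal.toReal (AddCircle.volume_closedBall (T := T) (x := x) r)
  rw [AddCircle.volume_eq_smul_haarAddCircle, Measure.smul_apply, smul_eq_mul, min_eq_right hr,
    ENNReal.toReal_mul, ENNReal.toReal_ofReal hT.le, ENNReal.toReal_ofReal (by linarith)] at h
  rw [measureReal_def, eq_div_iff hT.ne']
  linarith

instance : IsProbabilityMeasure haarC := by unfold haarC; infer_instance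

instance : haarC.IsAddRightInvariant := by unfold haarC; infer_instance

section Arcs

variable {ε : ℝ} {x : Circ}

lemma Iarc_eq_closedBall (i : ℕ) : Iarc ε i = Metric.closedBall 0 (ε ^ 3 ^ i / 2) := by
  ext; simp [Iarc]

lemma measurableSet_Iarc {i : ℕ} : MeasurableSet (Iarc ε i) := by
  rw [Iarc_eq_closedBall]; exact measurableSet_closedBall

lemma measurableSet_Nset : MeasurableSet Nset := by
  rw [show Nset = Metric.closedBall 0 (π / 2) by ext; simp [Nset]]; exact measurableSet_closedBall

lemma measureReal_Iarc (hε0 : 0 < ε) (hε1 : ε ≤ 1) (i : ℕ) :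
    haarC.real (Iarc ε i) = ε ^ 3 ^ i / (2 * π) := by
  have hpow : ε ^ 3 ^ i ≤ 1 := pow_le_one₀ hε0.le hε1
  rw [Iarc_eq_closedBall, haarC, AddCircle.haarAddCircle_real_closedBall _ (by positivity)
    (by linarith [pi_gt_three])]
  ring

lemma measureReal_Iarc_le (hε0 : 0 < ε) (hε1 : ε ≤ 1) (i : ℕ) :
    haarC.real (Iarc ε i) ≤ ε ^ 3 ^ i := by
  rw [measureReal_Iarc hε0 hε1]
  exact div_le_self (by positivity) (by linarith [pi_gt_three])

lemma pow_succ_le_measureReal_Iarc (hε0 : 0 < ε) (hε : ε ≤ 1 / (2 * π)) (i : ℕ) :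
    ε ^ (3 ^ i + 1) ≤ haarC.real (Iarc ε i) := by
  have hε1 : ε ≤ 1 := hε.trans (by rw [div_le_one (by positivity)]; linarith [pi_gt_three])
  rw [measureReal_Iarc hε0 hε1, pow_succ, div_eq_mul_one_div]
  gcongr

lemma Iarc_antitone (hε0 : 0 ≤ ε) (hε1 : ε ≤ 1) : Antitone (Iarc ε) := fun i _ hij x hx =>
  show ‖x‖ ≤ ε ^ 3 ^ i / 2 from hx.trans <| div_le_div_of_nonneg_right
    (pow_le_pow_of_le_one hε0 hε1 (Nat.pow_le_pow_right three_pos hij)) zero_le_two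

lemma norm_le_half_of_mem_Iarc {i : ℕ} (hε0 : 0 ≤ ε) (hε1 : ε ≤ 1) (hx : x ∈ Iarc ε i) :
    ‖x‖ ≤ 1 / 2 :=
  hx.trans (by linarith [pow_le_one₀ (n := 3 ^ i) hε0 hε1])

lemma Iarc_subset_Nset {i : ℕ} (hε0 : 0 ≤ ε) (hε1 : ε ≤ 1) : Iarc ε i ⊆ Nset := fun _ hx =>
  (norm_le_half_of_mem_Iarc hε0 hε1 hx).trans (by linarith [pi_gt_three])

lemma sub_pi_notMem_Iarc {i : ℕ} (hε0 : 0 ≤ ε) (hε1 : ε ≤ 1) (hx : x ∈ Nset) :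
    x - (π : Circ) ∉ Iarc ε i := by
  intro h
  have hπ : ‖(π : Circ)‖ = π := by
    simpa [abs_of_pos pi_pos] using AddCircle.norm_half_period_eq (p := 2 * π)
  have := norm_sub_le x (x - π)
  rw [sub_sub_cancel, hπ] at this
  linarith [norm_le_half_of_mem_Iarc hε0 hε1 h, pi_gt_three, show ‖x‖ ≤ π / 2 from hx]

lemma evenArc_antitone (hε0 : 0 ≤ ε) (hε1 : ε ≤ 1) : Antitone (evenArc ε) :=
  (Iarc_antitone hε0 hε1).comp_monotone fun i j h => by omega

lemma oddArc_antitone (hε0 : 0 ≤ ε) (hε1 : ε ≤ 1) : Antitone (oddArc ε) :=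
  (Iarc_antitone hε0 hε1).comp_monotone fun i j h => by omega

lemma Upot_eq_of_mem_Nset (hε0 : 0 ≤ ε) (hε1 : ε ≤ 1) (hx : x ∈ Nset) :
    Upot ε x = stepSum evenWeight (evenArc ε) x := by
  rw [Upot_eq_stepSum, add_eq_left]
  exact stepSum_eq_zero fun i => sub_pi_notMem_Iarc hε0 hε1 hx

lemma Upot_eq_of_notMem_Nset (hε0 : 0 ≤ ε) (hε1 : ε ≤ 1) (hx : x ∉ Nset) :
    Upot ε x = stepSum oddWeight (oddArc ε) (x - π) := by
  rw [Upot_eq_stepSum, add_eq_right]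
  exact stepSum_eq_zero fun i h => hx (Iarc_subset_Nset hε0 hε1 h)

lemma sum_evenWeight_le_Upot (hε0 : 0 ≤ ε) (hε1 : ε ≤ 1) {k : ℕ} (hx : x ∈ evenArc ε k) :
    ∑ i ∈ range (k + 1), evenWeight i ≤ Upot ε x := by
  rw [Upot_eq_stepSum]
  linarith [sum_le_stepSum_of_mem evenWeight_nonneg hasSum_evenWeight.summable
    (evenArc_antitone hε0 hε1) hx, stepSum_nonneg (t := oddArc ε) (y := x - π) oddWeight_nonneg]

lemma sum_oddWeight_le_Upot (hε0 : 0 ≤ ε) (hε1 : ε ≤ 1) {k : ℕ} (hx : x - π ∈ oddArc ε k) :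
    ∑ i ∈ range (k + 1), oddWeight i ≤ Upot ε x := by
  rw [Upot_eq_stepSum]
  linarith [sum_le_stepSum_of_mem oddWeight_nonneg hasSum_oddWeight.summable
    (oddArc_antitone hε0 hε1) hx, stepSum_nonneg (t := evenArc ε) (y := x) evenWeight_nonneg]

lemma Upot_mem_Icc (ε : ℝ) (x : Circ) : Upot ε x ∈ Set.Icc 0 1 := by
  rw [Upot_eq_stepSum]
  have hE := stepSum_le_tsum (t := evenArc ε) (y := x) evenWeight_nonneg hasSum_evenWeight.summable
  have hO := stepSum_le_tsum (t := oddArc ε) (y := x - π) oddWeight_nonneg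
    hasSum_oddWeight.summable
  rw [hasSum_evenWeight.tsum_eq] at hE
  rw [hasSum_oddWeight.tsum_eq] at hO
  constructor <;> linarith [stepSum_nonneg (t := evenArc ε) (y := x) evenWeight_nonneg,
    stepSum_nonneg (t := oddArc ε) (y := x - π) oddWeight_nonneg]

lemma measurable_Upot (ε : ℝ) : Measurable (Upot ε) := by
  rw [show Upot ε = _ from funext (Upot_eq_stepSum ε)]
  exact (measurable_stepSum fun _ => measurableSet_Iarc).add
    ((measurable_stepSum fun _ => measurableSet_Iarc).comp (measurable_sub_const _))

lemma integrable_exp_mul_Upot (ε β : ℝ) : Integrable (fun x => exp (β * Upot ε x)) haarC := by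
  refine Integrable.of_bound (C := exp |β|)
    (((measurable_Upot ε).const_mul β).exp.aestronglyMeasurable) (ae_of_all _ fun x => ?_)
  obtain ⟨h0, h1⟩ := Upot_mem_Icc ε x
  rw [norm_of_nonneg (exp_pos _).le, exp_le_exp]
  calc β * Upot ε x ≤ |β| * Upot ε x := mul_le_mul_of_nonneg_right (le_abs_self β) h0
    _ ≤ |β| := mul_le_of_le_one_right (abs_nonneg β) h1

end Arcs

lemma nat_add_one_le_nine_pow (n : ℕ) : (n : ℝ) + 1 ≤ 9 ^ n := by
  have := one_add_mul_le_pow (a := (8 : ℝ)) (by norm_num) n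
  norm_num at this
  linarith

lemma one_le_four_pow_mul_quarter_pow {j k : ℕ} (h : j ≤ k) :
    1 ≤ (4 : ℝ) ^ k * (1 / 4) ^ j := by
  rw [one_div_pow, ← div_eq_mul_one_div, one_le_div (by positivity)]
  exact pow_le_pow_right₀ (by norm_num) h

lemma three_pow_two_mul (m : ℕ) : (3 : ℝ) ^ (2 * m) = 9 ^ m := by rw [pow_mul]; norm_num

lemma exponents_of_even_dominant (k : ℕ) :
    let b : ℝ := 2 * 4 ^ (k + 1) * 9 ^ (k + 1)
    let e : ℝ := ((3 ^ (2 * (k + 1)) + 1 : ℕ) : ℝ) - b * (1 / 2 - (1 / 4) ^ (k + 1) / 2)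
    e ≤ -1 ∧
      (∀ j < k + 2, e + j + 2 ≤ ((3 ^ (2 * j + 1) : ℕ) : ℝ) - b * (1 / 2 - (1 / 4) ^ (j + 1)))
      ∧ e + 1 ≤ ((3 ^ (2 * (k + 2) + 1) : ℕ) : ℝ) - b * (1 / 2) := by
  intro b e
  have hX : (4 : ℝ) ^ (k + 1) * 9 ^ (k + 1) * (1 / 4) ^ (k + 1) = 9 ^ (k + 1) := by
    rw [mul_right_comm, ← mul_pow]; norm_num
  have he : e = 2 * 9 ^ (k + 1) + 1 - 4 ^ (k + 1) * 9 ^ (k + 1) := by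
    simp only [e, b]; push_cast; rw [three_pow_two_mul]; linarith
  have hF : (4 : ℝ) ≤ 4 ^ (k + 1) := le_self_pow₀ (by norm_num) (by omega)
  have h9 : (9 : ℝ) * (k + 1) ≤ 9 ^ (k + 1) := by
    rw [pow_succ]; linarith [nat_add_one_le_nine_pow k]
  have hFX := mul_le_mul_of_nonneg_right hF (by positivity : (0 : ℝ) ≤ 9 ^ (k + 1))
  simp only [b]
  push_cast
  rw [he]
  refine ⟨by linarith, fun j hj => ?_, ?_⟩
  · rw [pow_succ 3 (2 * j), three_pow_two_mul]
    have hj9 := nat_add_one_le_nine_pow j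
    rcases Nat.lt_succ_iff_lt_or_eq.mp hj with hj | rfl
    · have := mul_le_mul_of_nonneg_left (one_le_four_pow_mul_quarter_pow (by omega : j + 1 ≤ k + 1))
        (by positivity : (0 : ℝ) ≤ 9 ^ (k + 1))
      nlinarith
    · have : (4 : ℝ) ^ (k + 1) * 9 ^ (k + 1) * (1 / 4) ^ (k + 1 + 1) = 9 ^ (k + 1) / 4 := by
        rw [pow_succ (1 / 4 : ℝ) (k + 1), ← mul_assoc, hX]; ring
      push_cast
      nlinarith
  · rw [pow_succ 3, three_pow_two_mul, pow_succ 9 (k + 1)]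
    linarith

lemma exponents_of_odd_dominant (k : ℕ) :
    let b : ℝ := 5 * 4 ^ (k + 1) * 9 ^ k
    let e : ℝ := ((3 ^ (2 * k + 1) + 1 : ℕ) : ℝ) - b * (1 / 2 - (1 / 4) ^ (k + 1))
    e ≤ -1 ∧
      (∀ j < k + 1, e + j + 2 ≤ ((3 ^ (2 * (j + 1)) : ℕ) : ℝ) - b * (1 / 2 - (1 / 4) ^ (j + 1) / 2))
      ∧ e + 1 ≤ ((3 ^ (2 * (k + 1 + 1)) : ℕ) : ℝ) - b * (1 / 2) := by
  intro b e
  have hX : (4 : ℝ) ^ (k + 1) * 9 ^ k * (1 / 4) ^ (k + 1) = 9 ^ k := by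
    rw [mul_right_comm, ← mul_pow]; norm_num
  have he : e = 8 * 9 ^ k + 1 - 5 / 2 * 4 ^ (k + 1) * 9 ^ k := by
    simp only [e, b]; push_cast; rw [pow_succ 3 (2 * k), three_pow_two_mul]; linarith
  have hF : (4 : ℝ) ≤ 4 ^ (k + 1) := le_self_pow₀ (by norm_num) (by omega)
  have hk9 := nat_add_one_le_nine_pow k
  have hFX := mul_le_mul_of_nonneg_right hF (by positivity : (0 : ℝ) ≤ 9 ^ k)
  simp only [b]
  push_cast
  rw [he]
  refine ⟨by linarith, fun j hj => ?_, ?_⟩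
  · rw [three_pow_two_mul, pow_succ 9 j]
    have hj9 := nat_add_one_le_nine_pow j
    rcases Nat.lt_succ_iff_lt_or_eq.mp hj with hj | rfl
    · have hY : (4 : ℝ) ≤ 4 ^ (k + 1) * (1 / 4) ^ (j + 1) := by
        rw [pow_succ 4 k, mul_right_comm]
        linarith [one_le_four_pow_mul_quarter_pow (by omega : j + 1 ≤ k)]
      nlinarith [mul_le_mul_of_nonneg_left hY (by positivity : (0 : ℝ) ≤ 9 ^ k)]
    · nlinarith
  · rw [three_pow_two_mul, pow_succ 9 (k + 1), pow_succ 9 k]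
    linarith

section Gibbs

variable {ε : ℝ}

lemma le_one_div_two_pi (hε : ε ≤ 1 / 8) : ε ≤ 1 / (2 * π) :=
  hε.trans (one_div_le_one_div_of_le (by positivity) (by linarith [pi_lt_four]))

lemma setIntegral_compl_Nset_le (hε0 : 0 < ε) (hε : ε ≤ 1 / 8) (k : ℕ) :
    ∫ x in Nsetᶜ, exp (2 * 4 ^ (k + 1) * 9 ^ (k + 1) * log ε⁻¹ * Upot ε x) ∂haarC ≤
      3 * ε * ∫ x in Nset, exp (2 * 4 ^ (k + 1) * 9 ^ (k + 1) * log ε⁻¹ * Upot ε x) ∂haarC := by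
  have hε1 : ε ≤ 1 := by linarith
  obtain ⟨hdom, hlev, htop⟩ := exponents_of_even_dominant k
  refine setIntegral_exp_le_three_mul (n := k + 2) (q := fun j => 3 ^ (2 * j + 1))
    (p := 3 ^ (2 * (k + 1)) + 1) oddWeight_nonneg hasSum_oddWeight.summable
    (oddArc_antitone hε0.le hε1) (fun _ => measurableSet_Iarc) hε0 (by linarith) (by positivity)
    measurableSet_Nset.compl (fun x hx => (Upot_eq_of_notMem_Nset hε0.le hε1 hx).le)
    measurableSet_Iarc (Iarc_subset_Nset hε0.le hε1)
    (fun x hx => sum_evenWeight_le_Upot hε0.le hε1 hx) (integrable_exp_mul_Upot ε _).integrableOn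
    (fun j _ => measureReal_Iarc_le hε0 hε1 _)
    (pow_succ_le_measureReal_Iarc hε0 (le_one_div_two_pi hε) _) ?_ (fun j hj => ?_) ?_
  · rwa [sum_range_evenWeight]
  · rw [sum_range_evenWeight, sum_range_succ_oddWeight]; exact hlev j hj
  · rwa [sum_range_evenWeight, hasSum_oddWeight.tsum_eq]

lemma setIntegral_Nset_le (hε0 : 0 < ε) (hε : ε ≤ 1 / 8) (k : ℕ) :
    ∫ x in Nset, exp (5 * 4 ^ (k + 1) * 9 ^ k * log ε⁻¹ * Upot ε x) ∂haarC ≤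
      3 * ε * ∫ x in Nsetᶜ, exp (5 * 4 ^ (k + 1) * 9 ^ k * log ε⁻¹ * Upot ε x) ∂haarC := by
  have hε1 : ε ≤ 1 := by linarith
  obtain ⟨hdom, hlev, htop⟩ := exponents_of_odd_dominant k
  refine setIntegral_exp_le_three_mul (c := 0) (n := k + 1) (q := fun j => 3 ^ (2 * (j + 1)))
    (p := 3 ^ (2 * k + 1) + 1) (P := (fun x => x - (π : Circ)) ⁻¹' oddArc ε k)
    evenWeight_nonneg hasSum_evenWeight.summable (evenArc_antitone hε0.le hε1)
    (fun _ => measurableSet_Iarc) hε0 (by linarith) (by positivity) measurableSet_Nset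
    (fun x hx => by rw [sub_zero]; exact (Upot_eq_of_mem_Nset hε0.le hε1 hx).le)
    (measurableSet_Iarc.preimage (measurable_sub_const _))
    (fun x hx hxN => sub_pi_notMem_Iarc hε0.le hε1 hxN hx)
    (fun x hx => sum_oddWeight_le_Upot hε0.le hε1 hx) (integrable_exp_mul_Upot ε _).integrableOn
    (fun j _ => measureReal_Iarc_le hε0 hε1 _) ?_ ?_ (fun j hj => ?_) ?_
  · rw [measureReal_preimage_sub_right]
    exact pow_succ_le_measureReal_Iarc hε0 (le_one_div_two_pi hε) _
  · rwa [sum_range_succ_oddWeight]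
  · rw [sum_range_succ_oddWeight, sum_range_evenWeight]; exact hlev j hj
  · rwa [sum_range_succ_oddWeight, hasSum_evenWeight.tsum_eq]

lemma Gfun_eq (ε β : ℝ) :
    Gfun ε β = (∫ x in Nset, exp (β * Upot ε x) ∂haarC) /
      ((∫ x in Nset, exp (β * Upot ε x) ∂haarC) + ∫ x in Nsetᶜ, exp (β * Upot ε x) ∂haarC) := by
  rw [Gfun, integral_add_compl measurableSet_Nset (integrable_exp_mul_Upot ε β)]

lemma integral_Nset_add_integral_compl_pos (ε β : ℝ) :
    0 < (∫ x in Nset, exp (β * Upot ε x) ∂haarC) + ∫ x in Nsetᶜ, exp (β * Upot ε x) ∂haarC := by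
  rw [integral_add_compl measurableSet_Nset (integrable_exp_mul_Upot ε β)]
  exact integral_exp_pos (integrable_exp_mul_Upot ε β)

lemma Gfun_mem_Icc (ε β : ℝ) : Gfun ε β ∈ Set.Icc 0 1 := by
  have hA : 0 ≤ ∫ x in Nset, exp (β * Upot ε x) ∂haarC := integral_nonneg fun _ => (exp_pos _).le
  have hB : 0 ≤ ∫ x in Nsetᶜ, exp (β * Upot ε x) ∂haarC := integral_nonneg fun _ => (exp_pos _).le
  rw [Gfun_eq]
  exact ⟨div_nonneg hA (add_nonneg hA hB), div_le_one_of_le₀ (by linarith) (add_nonneg hA hB)⟩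

lemma one_sub_le_Gfun {β c : ℝ} (hc : 0 ≤ c)
    (h : ∫ x in Nsetᶜ, exp (β * Upot ε x) ∂haarC ≤ c * ∫ x in Nset, exp (β * Upot ε x) ∂haarC) :
    1 - c ≤ Gfun ε β := by
  have hB : 0 ≤ ∫ x in Nsetᶜ, exp (β * Upot ε x) ∂haarC := integral_nonneg fun _ => (exp_pos _).le
  rw [Gfun_eq, le_div_iff₀ (integral_Nset_add_integral_compl_pos ε β)]
  nlinarith [mul_nonneg hc hB]

lemma Gfun_le {β c : ℝ} (hc : 0 ≤ c)
    (h : ∫ x in Nset, exp (β * Upot ε x) ∂haarC ≤ c * ∫ x in Nsetᶜ, exp (β * Upot ε x) ∂haarC) :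
    Gfun ε β ≤ c := by
  have hA : 0 ≤ ∫ x in Nset, exp (β * Upot ε x) ∂haarC := integral_nonneg fun _ => (exp_pos _).le
  rw [Gfun_eq, div_le_iff₀ (integral_Nset_add_integral_compl_pos ε β)]
  nlinarith [mul_nonneg hc hA]

lemma tendsto_mul_log_inv (hε0 : 0 < ε) (hε1 : ε < 1) {b : ℕ → ℝ} (hb : ∀ k : ℕ, (k : ℝ) ≤ b k) :
    Tendsto (fun k => b k * log ε⁻¹) atTop atTop := by
  have hL : 0 < log ε⁻¹ := log_pos (one_lt_inv₀ hε0 |>.mpr hε1)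
  exact tendsto_atTop_mono (fun k => mul_le_mul_of_nonneg_right (hb k) hL.le)
    (tendsto_natCast_atTop_atTop.atTop_mul_const hL)

lemma frequently_one_sub_le_Gfun (hε0 : 0 < ε) (hε : ε ≤ 1 / 8) :
    ∃ᶠ β in atTop, 1 - 3 * ε ≤ Gfun ε β := by
  refine (tendsto_mul_log_inv hε0 (by linarith) fun k => ?_).frequently
    (Eventually.of_forall fun k => one_sub_le_Gfun (by positivity)
      (setIntegral_compl_Nset_le hε0 hε k)).frequently
  have h4 : (1 : ℝ) ≤ 4 ^ (k + 1) := one_le_pow₀ (by norm_num)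
  nlinarith [nat_add_one_le_nine_pow k, pow_succ (9 : ℝ) k,
    mul_le_mul_of_nonneg_right h4 (by positivity : (0 : ℝ) ≤ 9 ^ (k + 1))]

lemma frequently_Gfun_le (hε0 : 0 < ε) (hε : ε ≤ 1 / 8) :
    ∃ᶠ β in atTop, Gfun ε β ≤ 3 * ε := by
  refine (tendsto_mul_log_inv hε0 (by linarith) fun k => ?_).frequently
    (Eventually.of_forall fun k => Gfun_le (by positivity)
      (setIntegral_Nset_le hε0 hε k)).frequently
  have h4 : (1 : ℝ) ≤ 4 ^ (k + 1) := one_le_pow₀ (by norm_num)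
  nlinarith [nat_add_one_le_nine_pow k,
    mul_le_mul_of_nonneg_right h4 (by positivity : (0 : ℝ) ≤ 9 ^ k)]

end Gibbs

/-- van Enter–Ruszel non-selection: for every `δ ∈ (0,1/2)` there is
`ε_δ > 0` such that for all `0 < ε < ε_δ`, `limsup_{β→∞} G_ε(β) > 1 − δ` and
`liminf_{β→∞} G_ε(β) < δ`; in particular `G_ε(β)` has no limit as `β → ∞`, so the
family of two-site marginals of the Gibbs states does not converge as the
temperature goes to zero. -/
theorem no_selection (δ : ℝ) (hδ0 : 0 < δ) (hδ : δ < 1 / 2) :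
    ∃ εδ : ℝ, 0 < εδ ∧ εδ ≤ 1 ∧ ∀ ε : ℝ, 0 < ε → ε < εδ →
      (1 - δ < Filter.limsup (fun β : ℝ => Gfun ε β) Filter.atTop) ∧
      (Filter.liminf (fun β : ℝ => Gfun ε β) Filter.atTop < δ) := by
  refine ⟨δ / 4, by positivity, by linarith, fun ε hε0 hεδ => ⟨?_, ?_⟩⟩
  · calc 1 - δ < 1 - 3 * ε := by linarith
      _ ≤ _ := le_limsup_of_frequently_le (frequently_one_sub_le_Gfun hε0 (by linarith))
          (isBoundedUnder_of ⟨1, fun β => (Gfun_mem_Icc ε β).2⟩)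
  · calc _ ≤ 3 * ε := liminf_le_of_frequently_le (frequently_Gfun_le hε0 (by linarith))
          (isBoundedUnder_of ⟨0, fun β => (Gfun_mem_Icc ε β).1⟩)
      _ < δ := by linarith
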